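/- arXiv:1608.00127 — 3 statements merged into one kernel-verified Lean document; each statement's English description precedes it below -/
import Mathlib

section
/- For every constant ε > 0 there exists a constant c > 1 such that for all sufficiently large n there is a function Ext : {0,1}^n × {0,1}^n → {0,1} which is a two-source extractor for min-entropy k = ⌈c·log n·log log n⌉ with error ε: for every pair of independent (n,k)-sources X and Y, Δ(Ext(X,Y), U_1) ≤ ε. -/
open Finset Real

/-- Bit strings of length `n`. -/
abbrev BS (n : ℕ) := Fin n → Bool

noncomputable section

/-- `p` is a probability distribution on the finite type `α`. -/
def IsDist {α : Type*} [Fintype α] (p : α → ℝ) : Prop :=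
  (∀ x, 0 ≤ p x) ∧ ∑ x, p x = 1

/-- Statistical distance between two distributions on a finite type. -/
def statDist {α : Type*} [Fintype α] (p q : α → ℝ) : ℝ :=
  (∑ x, |p x - q x|) / 2

/-- Pushforward of a distribution along a function. -/
def distMap {α β : Type*} [Fintype α] [DecidableEq β] (f : α → β) (p : α → ℝ) : β → ℝ :=
  fun y => ∑ x ∈ Finset.univ.filter (fun x => f x = y), p x

/-- Product (independent joint) distribution. -/
def distProd {α β : Type*} (p : α → ℝ) (q : β → ℝ) : α × β → ℝ :=
  fun z => p z.1 * q z.2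

/-- Product of finitely many distributions (mutually independent joint distribution). -/
def distPi {ι : Type*} {α : ι → Type*} [Fintype ι] (p : ∀ i, α i → ℝ) : (∀ i, α i) → ℝ :=
  fun x => ∏ i, p i (x i)

/-- The uniform distribution on a finite type. -/
def unifDist (α : Type*) [Fintype α] : α → ℝ :=
  fun _ => (Fintype.card α : ℝ)⁻¹

/-- `p` has min-entropy at least `k`, i.e. every point has probability at most `2 ^ (-k)`. -/
def MinEntropyGE {α : Type*} (p : α → ℝ) (k : ℝ) : Prop :=
  ∀ x, p x ≤ (2:ℝ) ^ (-k)

/-- `ext` is a two-source extractor for min-entropy `k` with error `ε`. -/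
def IsTwoSourceExt {n m : ℕ} (ext : BS n → BS n → BS m) (k ε : ℝ) : Prop :=
  ∀ pX pY : BS n → ℝ, IsDist pX → IsDist pY →
    MinEntropyGE pX k → MinEntropyGE pY k →
      statDist (distMap (fun z : BS n × BS n => ext z.1 z.2) (distProd pX pY))
        (unifDist (BS m)) ≤ ε


/-!
A uniformly random `f : {0,1}ⁿ × {0,1}ⁿ → {0,1}` has, with positive probability, ±1-discrepancy
at most `δM²` on every rectangle `S × T` with `|S| = |T| = M = 2ᵏ`: by Hoeffding's inequality a
fixed rectangle fails with probability at most `2 exp(-δ²M²/2)`, and there are at most `2^(2nM)`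
rectangles, which this beats as soon as `M ≥ n²` and `δ²n` is large. With `c = 2`,
`k ≥ 2 log n`, so indeed `M ≥ n²`. A source of min-entropy `k` gives every point mass at most
`1/M`, so the bias of `f(X, Y)` is bounded by rectangle sums, one coordinate at a time; the
statistical distance of a bit from uniform is half its bias.
-/
def Bool.toSign (b : Bool) : ℝ := if b then 1 else -1

theorem card_filter_le_exp_neg_mul_sum_exp {α : Type*} [Fintype α] (g : α → ℝ) (a : ℝ) :
    (#{x | a ≤ g x} : ℝ) ≤ exp (-a) * ∑ x, exp (g x) := by
  have hmarkov : (#{x | a ≤ g x} : ℝ) * exp a ≤ ∑ x, exp (g x) :=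
    calc (#{x | a ≤ g x} : ℝ) * exp a ≤ ∑ x ∈ {x | a ≤ g x}, exp (g x) := by
          rw [← nsmul_eq_mul]
          exact card_nsmul_le_sum _ _ _ fun x hx => exp_le_exp.mpr (mem_filter.mp hx).2
      _ ≤ ∑ x, exp (g x) :=
          sum_le_sum_of_subset_of_nonneg (subset_univ _) fun x _ _ => (exp_pos _).le
  rw [exp_neg, inv_mul_eq_div, le_div_iff₀ (exp_pos a)]
  exact hmarkov

theorem sum_exp_mul_sum_toSign {Z : Type*} [Fintype Z] [DecidableEq Z] (A : Finset Z) (t : ℝ) :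
    ∑ f : Z → Bool, exp (t * ∑ z ∈ A, (f z).toSign) = 2 ^ Fintype.card Z * cosh t ^ #A := by
  have hfactor : ∀ z : Z, ∑ b : Bool, (if z ∈ A then exp (t * b.toSign) else 1)
      = 2 * if z ∈ A then cosh t else 1 := by
    intro z
    split_ifs
    · simp only [Fintype.sum_bool, Bool.toSign, if_true, Bool.false_eq_true, if_false, mul_one,
        mul_neg, cosh_eq]
      ring
    · norm_num
  calc ∑ f : Z → Bool, exp (t * ∑ z ∈ A, (f z).toSign)
      = ∑ f : Z → Bool, ∏ z, (if z ∈ A then exp (t * (f z).toSign) else 1) := by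
        simp only [prod_ite_mem, univ_inter, mul_sum, exp_sum]
    _ = ∏ z, ∑ b : Bool, (if z ∈ A then exp (t * b.toSign) else 1) :=
        (Fintype.prod_sum fun z (b : Bool) => if z ∈ A then exp (t * b.toSign) else 1).symm
    _ = 2 ^ Fintype.card Z * cosh t ^ #A := by
        simp only [hfactor, prod_mul_distrib, prod_const, card_univ, prod_ite_mem, univ_inter]

theorem card_filter_le_abs_sum_toSign {Z : Type*} [Fintype Z] [DecidableEq Z] (A : Finset Z)
    {b : ℝ} (hb : 0 ≤ b) :
    (#{f : Z → Bool | b ≤ |∑ z ∈ A, (f z).toSign|} : ℝ)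
      ≤ 2 * 2 ^ Fintype.card Z * exp (-(b ^ 2 / (2 * #A))) := by
  set X : (Z → Bool) → ℝ := fun f => ∑ z ∈ A, (f z).toSign
  -- `t = b / #A` minimises the Chernoff exponent `-t b + #A t² / 2`
  set t : ℝ := b / #A
  have ht : 0 ≤ t := by positivity
  have htail : ∀ s : ℝ, s ^ 2 = t ^ 2 → (#{f | t * b ≤ s * X f} : ℝ)
      ≤ 2 ^ Fintype.card Z * exp (-(b ^ 2 / (2 * #A))) := by
    intro s hs
    have hexponent : -(t * b) + #A * (s ^ 2 / 2) = -(b ^ 2 / (2 * #A)) := by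
      rw [hs, show t = b / #A from rfl]
      rcases eq_or_ne (#A : ℝ) 0 with hA | hA
      · simp [hA]
      · field_simp
        ring
    calc (#{f | t * b ≤ s * X f} : ℝ) ≤ exp (-(t * b)) * (2 ^ Fintype.card Z * cosh s ^ #A) := by
          rw [← sum_exp_mul_sum_toSign]
          exact card_filter_le_exp_neg_mul_sum_exp _ _
      _ ≤ exp (-(t * b)) * (2 ^ Fintype.card Z * exp (s ^ 2 / 2) ^ #A) := by
          gcongr
          exact cosh_le_exp_half_sq s
      _ = 2 ^ Fintype.card Z * exp (-(b ^ 2 / (2 * #A))) := by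
          rw [← exp_nat_mul, ← hexponent, exp_add]
          ring
  have hsplit : ({f | b ≤ |X f|} : Finset (Z → Bool))
      ⊆ ({f | t * b ≤ t * X f} : Finset _) ∪ ({f | t * b ≤ -t * X f} : Finset _) := by
    intro f hf
    simp only [mem_union, mem_filter, mem_univ, true_and] at hf ⊢
    rcases le_abs'.mp hf with h | h
    · right; nlinarith [mul_le_mul_of_nonneg_left h ht]
    · left; exact mul_le_mul_of_nonneg_left h ht
  calc (#{f | b ≤ |X f|} : ℝ) ≤ #{f | t * b ≤ t * X f} + #{f | t * b ≤ -t * X f} := by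
        exact_mod_cast (card_le_card hsplit).trans (card_union_le _ _)
    _ ≤ 2 * 2 ^ Fintype.card Z * exp (-(b ^ 2 / (2 * #A))) := by
        linarith [htail t rfl, htail (-t) (neg_sq t)]

def IsBalancedOnRectangles {α β : Type*} (f : α × β → Bool) (M : ℕ) (δ : ℝ) : Prop :=
  ∀ S : Finset α, ∀ T : Finset β, #S = M → #T = M → |∑ z ∈ S ×ˢ T, (f z).toSign| ≤ δ * M ^ 2

theorem exists_isBalancedOnRectangles {α β : Type*} [Fintype α] [Fintype β] [DecidableEq α]
    [DecidableEq β] (M : ℕ) {δ : ℝ} (hδ : 0 ≤ δ)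
    (h : ((Fintype.card α).choose M * (Fintype.card β).choose M : ℝ)
      * (2 * exp (-(δ ^ 2 * M ^ 2 / 2))) < 1) :
    ∃ f : α × β → Bool, IsBalancedOnRectangles f M δ := by
  by_contra hnone
  simp only [IsBalancedOnRectangles, not_exists, not_forall, not_le] at hnone
  set Q := Fintype.card (α × β)
  let rects := powersetCard M (univ : Finset α) ×ˢ powersetCard M (univ : Finset β)
  let bad : Finset α × Finset β → Finset (α × β → Bool) :=
    fun R => {f | δ * M ^ 2 ≤ |∑ z ∈ R.1 ×ˢ R.2, (f z).toSign|}
  have hcover : (univ : Finset (α × β → Bool)) ⊆ rects.biUnion bad := by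
    intro f _
    obtain ⟨S, T, hS, hT, hf⟩ := hnone f
    exact mem_biUnion.mpr ⟨(S, T), mem_product.mpr ⟨mem_powersetCard_univ.mpr hS,
      mem_powersetCard_univ.mpr hT⟩, mem_filter.mpr ⟨mem_univ f, hf.le⟩⟩
  have hbad : ∀ R ∈ rects, (#(bad R) : ℝ) ≤ 2 * 2 ^ Q * exp (-(δ ^ 2 * M ^ 2 / 2)) := by
    intro R hR
    obtain ⟨hS, hT⟩ := mem_product.mp hR
    have hcard : (#(R.1 ×ˢ R.2) : ℝ) = M ^ 2 := by
      rw [card_product, mem_powersetCard_univ.mp hS, mem_powersetCard_univ.mp hT]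
      push_cast
      ring
    have hexponent : (δ * M ^ 2) ^ 2 / (2 * (M ^ 2 : ℝ)) = δ ^ 2 * M ^ 2 / 2 := by
      rcases eq_or_ne (M : ℝ) 0 with hM | hM
      · simp [hM]
      · field_simp
    have := card_filter_le_abs_sum_toSign (R.1 ×ˢ R.2) (b := δ * M ^ 2) (by positivity)
    rwa [hcard, hexponent] at this
  have hrects : (#rects : ℝ) = (Fintype.card α).choose M * (Fintype.card β).choose M := by
    simp only [rects, card_product, card_powersetCard, card_univ, Nat.cast_mul]
  have : (2 : ℝ) ^ Q < 2 ^ Q := calc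
    (2 : ℝ) ^ Q = #(univ : Finset (α × β → Bool)) := by simp [Q]
    _ ≤ ∑ R ∈ rects, (#(bad R) : ℝ) := by
        exact_mod_cast (card_le_card hcover).trans card_biUnion_le
    _ ≤ #rects * (2 * 2 ^ Q * exp (-(δ ^ 2 * M ^ 2 / 2))) := by
        simpa using sum_le_sum hbad
    _ = 2 ^ Q * (#rects * (2 * exp (-(δ ^ 2 * M ^ 2 / 2)))) := by ring
    _ < 2 ^ Q * 1 := by rw [hrects]; gcongr
    _ = 2 ^ Q := mul_one _
  exact lt_irrefl _ this

theorem exists_card_eq_forall_notMem_le {α : Type*} [Fintype α] [DecidableEq α] (g : α → ℝ)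
    {M : ℕ} (hM : M ≤ Fintype.card α) :
    ∃ S : Finset α, #S = M ∧ ∀ x ∉ S, ∀ y ∈ S, g x ≤ g y := by
  induction M with
  | zero => exact ⟨∅, card_empty, fun _ _ _ hy => absurd hy (notMem_empty _)⟩
  | succ m ih =>
    obtain ⟨S, hcard, htop⟩ := ih (by omega)
    have hne : Sᶜ.Nonempty := by
      rw [← card_pos, card_compl, hcard]
      omega
    obtain ⟨a, ha, hmax⟩ := exists_max_image Sᶜ g hne
    have haS : a ∉ S := mem_compl.mp ha
    refine ⟨insert a S, by rw [card_insert_of_notMem haS, hcard], fun x hx y hy => ?_⟩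
    rw [mem_insert, not_or] at hx
    rcases mem_insert.mp hy with rfl | hyS
    · exact hmax x (mem_compl.mpr hx.2)
    · exact htop x hx.2 y hyS

namespace IsDist

variable {α : Type*} [Fintype α] {p : α → ℝ} {M : ℕ}

theorem pos_and_le_card (hp : IsDist p) (hM : ∀ x, p x ≤ (M : ℝ)⁻¹) :
    0 < M ∧ M ≤ Fintype.card α := by
  have hsum : (1 : ℝ) ≤ Fintype.card α * (M : ℝ)⁻¹ := by
    simpa [← hp.2] using sum_le_sum fun x (_ : x ∈ univ) => hM x
  have hMpos : 0 < M := by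
    rcases Nat.eq_zero_or_pos M with rfl | h
    · norm_num at hsum
    · exact h
  refine ⟨hMpos, ?_⟩
  rw [← div_eq_mul_inv, one_le_div (by positivity)] at hsum
  exact_mod_cast hsum

-- Under `p ≤ 1/M`, `∑ p g` is largest for `p` uniform on the `M` largest values of `g`.
theorem sum_mul_le_of_forall_card_eq [DecidableEq α] (hp : IsDist p) (hM : ∀ x, p x ≤ (M : ℝ)⁻¹)
    (g : α → ℝ) {B : ℝ} (hB : ∀ S : Finset α, #S = M → ∑ x ∈ S, g x ≤ B) :
    ∑ x, p x * g x ≤ B / M := by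
  obtain ⟨hMpos, hMcard⟩ := hp.pos_and_le_card hM
  obtain ⟨S, hS, htop⟩ := exists_card_eq_forall_notMem_le g hMcard
  obtain ⟨x₀, hx₀, hmin⟩ := exists_min_image S g (card_pos.mp (hS ▸ hMpos))
  have hshift : ∑ x, p x * (g x - g x₀) ≤ ∑ x ∈ S, (M : ℝ)⁻¹ * (g x - g x₀) := by
    rw [← sum_add_sum_compl S]
    have hin : ∑ x ∈ S, p x * (g x - g x₀) ≤ ∑ x ∈ S, (M : ℝ)⁻¹ * (g x - g x₀) :=
      sum_le_sum fun x hx => mul_le_mul_of_nonneg_right (hM x) (sub_nonneg.mpr (hmin x hx))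
    have hout : ∑ x ∈ Sᶜ, p x * (g x - g x₀) ≤ 0 :=
      sum_nonpos fun x hx => mul_nonpos_of_nonneg_of_nonpos (hp.1 x)
        (sub_nonpos.mpr (htop x (mem_compl.mp hx) x₀ hx₀))
    linarith
  have hlhs : ∑ x, p x * (g x - g x₀) = ∑ x, p x * g x - g x₀ := by
    simp only [mul_sub, sum_sub_distrib, ← sum_mul, hp.2, one_mul]
  have hrhs : ∑ x ∈ S, (M : ℝ)⁻¹ * (g x - g x₀) = (∑ x ∈ S, g x) / M - g x₀ := by
    rw [← mul_sum, sum_sub_distrib, sum_const, hS, nsmul_eq_mul]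
    field_simp
  have hBM : (∑ x ∈ S, g x) / M ≤ B / M := by gcongr; exact hB S hS
  linarith

theorem abs_sum_mul_le_of_forall_card_eq [DecidableEq α] (hp : IsDist p)
    (hM : ∀ x, p x ≤ (M : ℝ)⁻¹) (g : α → ℝ) {B : ℝ}
    (hB : ∀ S : Finset α, #S = M → |∑ x ∈ S, g x| ≤ B) :
    |∑ x, p x * g x| ≤ B / M := by
  have hupper := hp.sum_mul_le_of_forall_card_eq hM g fun S hS => (le_abs_self _).trans (hB S hS)
  have hlower := hp.sum_mul_le_of_forall_card_eq hM (fun x => -g x) fun S hS => by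
    rw [sum_neg_distrib]
    exact (neg_le_abs _).trans (hB S hS)
  simp only [mul_neg, sum_neg_distrib] at hlower
  exact abs_le.mpr ⟨by linarith, hupper⟩

end IsDist

theorem IsDist.distProd {α β : Type*} [Fintype α] [Fintype β] {p : α → ℝ} {q : β → ℝ}
    (hp : IsDist p) (hq : IsDist q) : IsDist (distProd p q) :=
  ⟨fun z => mul_nonneg (hp.1 z.1) (hq.1 z.2), by
    rw [Fintype.sum_prod_type]
    simp only [_root_.distProd, ← mul_sum, hq.2, mul_one, hp.2]⟩

theorem IsBalancedOnRectangles.abs_sum_distProd_mul_toSign_le {α β : Type*} [Fintype α]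
    [Fintype β] [DecidableEq α] [DecidableEq β] {f : α × β → Bool} {M : ℕ} {δ : ℝ}
    (hf : IsBalancedOnRectangles f M δ) {pX : α → ℝ} {pY : β → ℝ} (hX : IsDist pX)
    (hY : IsDist pY) (hbX : ∀ x, pX x ≤ (M : ℝ)⁻¹) (hbY : ∀ y, pY y ≤ (M : ℝ)⁻¹) :
    |∑ z, distProd pX pY z * (f z).toSign| ≤ δ := by
  have hM : (M : ℝ) ≠ 0 := Nat.cast_ne_zero.mpr (hX.pos_and_le_card hbX).1.ne'
  set g : α → ℝ := fun x => ∑ y, pY y * (f (x, y)).toSign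
  have hrows : ∀ S : Finset α, #S = M → |∑ x ∈ S, g x| ≤ δ * M := by
    intro S hS
    have hcols := hY.abs_sum_mul_le_of_forall_card_eq hbY
      (fun y => ∑ x ∈ S, (f (x, y)).toSign) fun T hT => by
        simpa only [sum_product_right] using hf S T hS hT
    calc |∑ x ∈ S, g x| = |∑ y, pY y * ∑ x ∈ S, (f (x, y)).toSign| := by
          simp only [g, mul_sum]
          rw [sum_comm]
      _ ≤ δ * M ^ 2 / M := hcols
      _ = δ * M := by field_simp
  calc |∑ z, distProd pX pY z * (f z).toSign| = |∑ x, pX x * g x| := by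
        simp only [Fintype.sum_prod_type, distProd, g, mul_sum, mul_assoc]
    _ ≤ δ * M / M := hX.abs_sum_mul_le_of_forall_card_eq hbX g hrows
    _ = δ := by field_simp

theorem sum_distMap_mul {α β : Type*} [Fintype α] [Fintype β] [DecidableEq β] (f : α → β)
    (p : α → ℝ) (h : β → ℝ) : ∑ y, distMap f p y * h y = ∑ x, p x * h (f x) := calc
  ∑ y, distMap f p y * h y = ∑ y, ∑ x with f x = y, p x * h (f x) := by
      refine sum_congr rfl fun y _ => ?_
      rw [distMap, sum_mul]
      exact sum_congr rfl fun x hx => by rw [(mem_filter.mp hx).2]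
  _ = ∑ x, p x * h (f x) := sum_fiberwise univ f _

theorem statDist_unifDist_bs_one {q : BS 1 → ℝ} (hq : ∑ w, q w = 1) :
    statDist q (unifDist (BS 1)) = |∑ w, q w * (w 0).toSign| / 2 := by
  have hbool : ∀ F : BS 1 → ℝ, ∑ w, F w = F (fun _ => true) + F (fun _ => false) := fun F => by
    rw [← (Equiv.funUnique (Fin 1) Bool).symm.sum_comp, Fintype.sum_bool]
    rfl
  rw [hbool] at hq
  simp only [statDist, unifDist, hbool, Fintype.card_fun, Fintype.card_bool, Fintype.card_fin,
    Bool.toSign, if_true, Bool.false_eq_true, if_false]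
  rw [show q (fun _ => false) = 1 - q (fun _ => true) by linarith]
  generalize q (fun _ => true) = a
  rw [show a * 1 + (1 - a) * -1 = 2 * (a - 2⁻¹) by ring, abs_mul,
    show (1 - a) - ((2 ^ 1 : ℕ) : ℝ)⁻¹ = -(a - 2⁻¹) by norm_num; ring, abs_neg]
  norm_num

theorem statDist_distMap_unifDist_bs_one {α : Type*} [Fintype α] (f : α → Bool) {p : α → ℝ}
    (hp : ∑ x, p x = 1) :
    statDist (distMap (fun x => (fun _ => f x : BS 1)) p) (unifDist (BS 1))
      = |∑ x, p x * (f x).toSign| / 2 := by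
  have hq : ∑ w, distMap (fun x => (fun _ => f x : BS 1)) p w = 1 := by
    simpa [hp] using sum_distMap_mul (fun x => (fun _ => f x : BS 1)) p 1
  rw [statDist_unifDist_bs_one hq, sum_distMap_mul]

theorem choose_mul_choose_mul_exp_lt_one {n M : ℕ} {δ : ℝ} (hM : n ^ 2 ≤ M)
    (hδ : 6 ≤ δ ^ 2 * n) :
    ((2 ^ n).choose M * (2 ^ n).choose M : ℝ) * (2 * exp (-(δ ^ 2 * M ^ 2 / 2))) < 1 := by
  have hn : (1 : ℝ) ≤ n := by
    rcases Nat.eq_zero_or_pos n with rfl | h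
    · norm_num at hδ
    · exact_mod_cast h
  have hM' : (n : ℝ) ^ 2 ≤ M := by exact_mod_cast hM
  have hnM : (1 : ℝ) ≤ n * M := by nlinarith
  have hchoose : ((2 ^ n).choose M : ℝ) ≤ 2 ^ (n * M) := by
    rw [pow_mul]
    exact_mod_cast Nat.choose_le_pow _ _
  have hpow : (2 : ℝ) ^ (2 * (n * M) + 1) < exp (2 * (n * M) + 1) := by
    have := pow_lt_pow_left₀ (by linarith [exp_one_gt_d9] : (2 : ℝ) < exp 1) (by norm_num)
      (Nat.succ_ne_zero (2 * (n * M)))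
    rw [exp_one_pow] at this
    exact_mod_cast this
  have hexponent : 2 * (n * M : ℝ) + 1 ≤ δ ^ 2 * M ^ 2 / 2 := by
    have : 6 * (n * M : ℝ) ≤ δ ^ 2 * M ^ 2 := calc
      6 * (n * M : ℝ) ≤ δ ^ 2 * n * (n * M) := by gcongr
      _ = δ ^ 2 * (n ^ 2 * M) := by ring
      _ ≤ δ ^ 2 * (M * M) := by gcongr
      _ = δ ^ 2 * M ^ 2 := by ring
    linarith
  calc ((2 ^ n).choose M * (2 ^ n).choose M : ℝ) * (2 * exp (-(δ ^ 2 * M ^ 2 / 2)))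
      ≤ 2 ^ (n * M) * 2 ^ (n * M) * (2 * exp (-(δ ^ 2 * M ^ 2 / 2))) := by gcongr
    _ = 2 ^ (2 * (n * M) + 1) * exp (-(δ ^ 2 * M ^ 2 / 2)) := by ring
    _ < exp (2 * (n * M) + 1) * exp (-(δ ^ 2 * M ^ 2 / 2)) := by gcongr
    _ ≤ 1 := by
        rw [← exp_add, exp_le_one_iff]
        linarith

theorem sq_le_two_pow_ceil_two_mul_logb_mul_logb_logb {n : ℕ} (hn : 4 ≤ n) :
    n ^ 2 ≤ 2 ^ ⌈2 * logb 2 n * logb 2 (logb 2 n)⌉₊ := by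
  have hn' : (4 : ℝ) ≤ n := by exact_mod_cast hn
  have hlog : 2 ≤ logb 2 (n : ℝ) := by
    rw [le_logb_iff_rpow_le one_lt_two (by linarith)]
    norm_num
    exact hn
  have hloglog : 1 ≤ logb 2 (logb 2 (n : ℝ)) := by
    rw [le_logb_iff_rpow_le one_lt_two (by linarith)]
    simpa using hlog
  have hk : 2 * logb 2 (n : ℝ) ≤ ⌈2 * logb 2 n * logb 2 (logb 2 n)⌉₊ :=
    (le_mul_of_one_le_right (by linarith) hloglog).trans (Nat.le_ceil _)
  have : ((n ^ 2 : ℕ) : ℝ) ≤ ((2 ^ ⌈2 * logb 2 n * logb 2 (logb 2 n)⌉₊ : ℕ) : ℝ) := calc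
    ((n ^ 2 : ℕ) : ℝ) = (2 : ℝ) ^ (2 * logb 2 (n : ℝ)) := by
        rw [mul_comm, rpow_mul (by norm_num), rpow_logb (by norm_num) (by norm_num) (by linarith)]
        norm_num
    _ ≤ (2 : ℝ) ^ (⌈2 * logb 2 n * logb 2 (logb 2 n)⌉₊ : ℝ) :=
        rpow_le_rpow_of_exponent_le (by norm_num) hk
    _ = ((2 ^ ⌈2 * logb 2 n * logb 2 (logb 2 n)⌉₊ : ℕ) : ℝ) := by norm_num
  exact_mod_cast this

theorem stmt1 :
    ∀ ε : ℝ, ε > 0 →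
      ∃ c : ℝ, c > 1 ∧ ∃ N : ℕ, ∀ n : ℕ, n ≥ N →
        ∃ ext : BS n → BS n → BS 1,
          IsTwoSourceExt ext (⌈c * logb 2 n * logb 2 (logb 2 n)⌉₊ : ℝ) ε := by
  intro ε hε
  refine ⟨2, by norm_num, ⌈2 / ε ^ 2⌉₊ + 4, fun n hn => ?_⟩
  set k := ⌈2 * logb 2 n * logb 2 (logb 2 n)⌉₊
  have hM : n ^ 2 ≤ 2 ^ k := sq_le_two_pow_ceil_two_mul_logb_mul_logb_logb (by omega)
  have hδ : 6 ≤ (2 * ε) ^ 2 * n := by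
    have : 2 / ε ^ 2 ≤ n := (Nat.le_ceil _).trans (by exact_mod_cast (by omega : _ ≤ n))
    rw [div_le_iff₀ (by positivity)] at this
    nlinarith
  obtain ⟨f, hf⟩ := exists_isBalancedOnRectangles (α := BS n) (β := BS n) (δ := 2 * ε) (2 ^ k)
    (by positivity) (by simpa using choose_mul_choose_mul_exp_lt_one hM hδ)
  refine ⟨fun x y _ => f (x, y), fun pX pY hX hY hmX hmY => ?_⟩
  have hinv : (2 : ℝ) ^ (-(k : ℝ)) = ((2 ^ k : ℕ) : ℝ)⁻¹ := by
    rw [rpow_neg zero_le_two, rpow_natCast]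
    push_cast
    rfl
  have hbias := hf.abs_sum_distProd_mul_toSign_le hX hY (fun x => (hmX x).trans_eq hinv)
    (fun y => (hmY y).trans_eq hinv)
  rw [statDist_distMap_unifDist_bs_one _ (hX.distProd hY).2]
  linarith
end
end

section
/- For every constant ε > 0 there exists a constant c > 1 such that for all sufficiently large n there is a function Ext : ({0,1}^n)^{10} → {0,1} which is an extractor for 10 independent sources with min-entropy k = ⌈c·log n⌉ and error ε: for all mutually independent (n,k)-sources X_1,…,X_{10}, Δ(Ext(X_1,…,X_{10}), U_1) ≤ ε. -/
/-!
A uniformly random `g : {0,1}ⁿ × {0,1}ⁿ → {0,1}`, applied to the first two sources, is an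
extractor with positive probability. By Hoeffding's inequality and a union bound over the at most
`2^(2nK)` pairs of `K`-sets, some `g` has `±1`-sum at most `εK²` in absolute value on every
`K × K` rectangle. A linear functional of a distribution whose point masses are at most `1/K` is
maximised, up to the factor `1/K`, by a sum over some `K`-set, so applying this to each of two
independent such sources bounds the bias of `g(X₁, X₂)` by `ε`. The choice
`K = 2^⌈2 log₂ n⌉ ≥ n²` makes the union bound succeed once `n ≥ 6 / ε²`.
-/

open Finset Real

noncomputable section

def bitSign (b : Bool) : ℝ := if b then 1 else -1

section Discrepancy

variable {γ : Type*} [Fintype γ] [DecidableEq γ]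

lemma sum_exp_mul_sum_bitSign_le (S : Finset γ) (a : ℝ) :
    ∑ g : γ → Bool, exp (a * ∑ z ∈ S, bitSign (g z))
      ≤ 2 ^ Fintype.card γ * exp (#S * a ^ 2 / 2) := by
  have hfactor : ∀ g : γ → Bool, exp (a * ∑ z ∈ S, bitSign (g z))
      = ∏ z, if z ∈ S then exp (a * bitSign (g z)) else 1 := fun g => by
    rw [prod_ite_mem, univ_inter, mul_sum, exp_sum]
  calc ∑ g : γ → Bool, exp (a * ∑ z ∈ S, bitSign (g z))
      = ∏ z, ∑ b, if z ∈ S then exp (a * bitSign b) else 1 := by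
        simp_rw [hfactor]
        exact (Fintype.prod_sum fun z b => if z ∈ S then exp (a * bitSign b) else 1).symm
    _ = ∏ z, 2 * if z ∈ S then cosh a else 1 := by
        refine prod_congr rfl fun z _ => ?_
        split_ifs <;> simp [bitSign, cosh_eq]
        ring
    _ = 2 ^ Fintype.card γ * cosh a ^ #S := by
        rw [prod_mul_distrib, prod_const, card_univ, prod_ite_mem, univ_inter, prod_const]
    _ ≤ 2 ^ Fintype.card γ * exp (a ^ 2 / 2) ^ #S := by
        gcongr
        exact cosh_le_exp_half_sq a
    _ = 2 ^ Fintype.card γ * exp (#S * a ^ 2 / 2) := by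
        rw [← exp_nat_mul, mul_div_assoc]

lemma card_filter_le_abs_sum_bitSign_le (S : Finset γ) {a : ℝ} (ha : 0 ≤ a) (t : ℝ) :
    (#{g : γ → Bool | t ≤ |∑ z ∈ S, bitSign (g z)|} : ℝ)
      ≤ 2 * 2 ^ Fintype.card γ * exp (#S * a ^ 2 / 2 - a * t) := by
  set X : (γ → Bool) → ℝ := fun g => ∑ z ∈ S, bitSign (g z)
  have hmarkov : (#{g | t ≤ |X g|} : ℝ) * exp (a * t)
      ≤ ∑ g, (exp (a * X g) + exp (-a * X g)) := by
    calc (#{g | t ≤ |X g|} : ℝ) * exp (a * t) = ∑ g ∈ {g | t ≤ |X g|}, exp (a * t) := by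
          rw [sum_const, nsmul_eq_mul]
      _ ≤ ∑ g ∈ {g | t ≤ |X g|}, exp (a * |X g|) :=
          sum_le_sum fun g hg => exp_le_exp.2 (mul_le_mul_of_nonneg_left (mem_filter.1 hg).2 ha)
      _ ≤ ∑ g ∈ {g | t ≤ |X g|}, (exp (a * X g) + exp (-a * X g)) := by
          refine sum_le_sum fun g _ => ?_
          rcases abs_cases (X g) with ⟨h, -⟩ | ⟨h, -⟩ <;> rw [h]
          · linarith [exp_pos (-a * X g)]
          · rw [mul_neg, ← neg_mul]; linarith [exp_pos (a * X g)]
      _ ≤ ∑ g, (exp (a * X g) + exp (-a * X g)) :=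
          sum_le_sum_of_subset_of_nonneg (subset_univ _) fun _ _ _ => by positivity
  have hpos := sum_exp_mul_sum_bitSign_le S a
  have hneg := sum_exp_mul_sum_bitSign_le S (-a)
  rw [sum_add_distrib] at hmarkov
  rw [neg_sq] at hneg
  rw [exp_sub, ← mul_div_assoc, le_div_iff₀ (exp_pos _)]
  linarith

lemma exists_forall_abs_sum_bitSign_lt {ι : Type*} (J : Finset ι) (S : ι → Finset γ) {m : ℕ}
    (hS : ∀ j ∈ J, #(S j) ≤ m) {t : ℝ} (ht : 0 ≤ t)
    (hJ : 2 * #J < exp (t ^ 2 / (2 * m))) :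
    ∃ g : γ → Bool, ∀ j ∈ J, |∑ z ∈ S j, bitSign (g z)| < t := by
  set Bad : ι → Finset (γ → Bool) := fun j => {g | t ≤ |∑ z ∈ S j, bitSign (g z)|}
  have hBad : ∀ j ∈ J,
      (#(Bad j) : ℝ) ≤ 2 * 2 ^ Fintype.card γ * exp (-(t ^ 2 / (2 * m))) := by
    intro j hj
    refine (card_filter_le_abs_sum_bitSign_le (S j) (div_nonneg ht m.cast_nonneg) t).trans ?_
    gcongr
    have hSj : (#(S j) : ℝ) ≤ m := by exact_mod_cast hS j hj
    calc #(S j) * (t / m) ^ 2 / 2 - t / m * t ≤ m * (t / m) ^ 2 / 2 - t / m * t := by gcongr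
      _ = -(t ^ 2 / (2 * m)) := by
          rcases eq_or_ne (m : ℝ) 0 with hm | hm
          · simp [hm]
          · field_simp; ring
  have hcard : #(J.biUnion Bad) < #(univ : Finset (γ → Bool)) := by
    have hlt : (#(J.biUnion Bad) : ℝ) < 2 ^ Fintype.card γ := by
      calc (#(J.biUnion Bad) : ℝ) ≤ ∑ j ∈ J, (#(Bad j) : ℝ) := by
            exact_mod_cast card_biUnion_le
        _ ≤ #J * (2 * 2 ^ Fintype.card γ * exp (-(t ^ 2 / (2 * m)))) := by
            simpa using sum_le_sum hBad
        _ = 2 ^ Fintype.card γ * ((2 * #J) * exp (-(t ^ 2 / (2 * m)))) := by ring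
        _ < 2 ^ Fintype.card γ := by
            rw [exp_neg, ← div_eq_mul_inv]
            exact mul_lt_of_lt_one_right (by positivity) ((div_lt_one (exp_pos _)).2 hJ)
    rw [card_univ, Fintype.card_fun, Fintype.card_bool]
    exact_mod_cast hlt
  obtain ⟨g, -, hg⟩ := exists_mem_notMem_of_card_lt_card hcard
  exact ⟨g, fun j hj => not_le.1 fun h =>
    hg (mem_biUnion.2 ⟨j, hj, mem_filter.2 ⟨mem_univ _, h⟩⟩)⟩

lemma exists_forall_abs_sum_rectangle_lt {β : Type*} [Fintype β] (K : ℕ) {δ : ℝ}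
    (hδ : 0 ≤ δ) (h : 2 * (Fintype.card β : ℝ) ^ (2 * K) < exp (δ ^ 2 * K ^ 2 / 2)) :
    ∃ g : β × β → Bool, ∀ A B : Finset β, #A = K → #B = K →
      |∑ z ∈ A ×ˢ B, bitSign (g z)| < δ * K ^ 2 := by
  classical
  set P := powersetCard K (univ : Finset β)
  have hP : (#(P ×ˢ P) : ℝ) ≤ (Fintype.card β : ℝ) ^ (2 * K) := by
    have hchoose := Nat.choose_le_pow (Fintype.card β) K
    rw [card_product, card_powersetCard, card_univ, two_mul, pow_add]
    exact_mod_cast Nat.mul_le_mul hchoose hchoose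
  have hexp : (δ * K ^ 2) ^ 2 / (2 * ((K ^ 2 : ℕ) : ℝ)) = δ ^ 2 * K ^ 2 / 2 := by
    rcases eq_or_ne (K : ℝ) 0 with hK | hK
    · simp [hK]
    · field_simp; push_cast; ring
  obtain ⟨g, hg⟩ := exists_forall_abs_sum_bitSign_lt (γ := β × β) (P ×ˢ P)
    (fun AB => AB.1 ×ˢ AB.2) (m := K ^ 2) (t := δ * K ^ 2)
    (fun AB hAB => by
      simp only [P, mem_product, mem_powersetCard_univ] at hAB
      rw [card_product, hAB.1, hAB.2, sq])
    (by positivity) (by rw [hexp]; linarith)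
  exact ⟨g, fun A B hA hB =>
    hg (A, B) (mem_product.2 ⟨mem_powersetCard_univ.2 hA, mem_powersetCard_univ.2 hB⟩)⟩

end Discrepancy

section FlatSources

variable {α β : Type*} [Fintype α] [Fintype β] {K : ℕ}

lemma IsDist.pos_and_le_card_s6 {p : α → ℝ} (hp : IsDist p)
    (hpK : ∀ x, p x ≤ (K : ℝ)⁻¹) :
    0 < K ∧ K ≤ Fintype.card α := by
  have hone : (1 : ℝ) ≤ Fintype.card α * (K : ℝ)⁻¹ := by
    calc (1 : ℝ) = ∑ x, p x := hp.2.symm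
      _ ≤ ∑ _x : α, (K : ℝ)⁻¹ := sum_le_sum fun x _ => hpK x
      _ = Fintype.card α * (K : ℝ)⁻¹ := by simp
  have hK : 0 < K := Nat.pos_of_ne_zero fun h => by simp [h] at hone; linarith
  refine ⟨hK, ?_⟩
  rw [← div_eq_mul_inv, one_le_div (by positivity)] at hone
  exact_mod_cast hone

lemma exists_card_eq_forall_le_of_notMem (f : α → ℝ)
    (hK : K ≤ Fintype.card α) :
    ∃ A : Finset α, #A = K ∧ ∀ x ∈ A, ∀ y ∉ A, f y ≤ f x := by
  classical
  have hne : (powersetCard K (univ : Finset α)).Nonempty :=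
    powersetCard_nonempty.2 (by simpa using hK)
  obtain ⟨A, hA, hmax⟩ := exists_max_image _ (fun A => ∑ x ∈ A, f x) hne
  rw [mem_powersetCard_univ] at hA
  refine ⟨A, hA, fun x hx y hy => ?_⟩
  have hy' : y ∉ A.erase x := fun h => hy (mem_of_mem_erase h)
  have hswap : #(insert y (A.erase x)) = K := by
    rw [card_insert_of_notMem hy', card_erase_of_mem hx, hA]
    have := card_pos.2 ⟨x, hx⟩
    omega
  have h := hmax _ (mem_powersetCard_univ.2 hswap)
  rw [sum_insert hy', sum_erase_eq_sub hx] at h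
  linarith

lemma IsDist.sum_mul_le_of_forall_le {p f : α → ℝ} (hp : IsDist p) {A : Finset α}
    (hpA : ∀ x, p x ≤ (#A : ℝ)⁻¹) (hA : ∀ x ∈ A, ∀ y ∉ A, f y ≤ f x) :
    ∑ x, p x * f x ≤ (∑ x ∈ A, f x) / #A := by
  classical
  have hApos := (hp.pos_and_le_card_s6 hpA).1
  obtain ⟨x₀, hx₀, hmin⟩ := exists_min_image A f (card_pos.1 hApos)
  set m := f x₀
  have houtside : ∑ x ∈ Aᶜ, p x * (f x - m) ≤ 0 :=
    sum_nonpos fun y hy => mul_nonpos_of_nonneg_of_nonpos (hp.1 y)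
      (by linarith [hA x₀ hx₀ y (mem_compl.1 hy)])
  have hinside : ∑ x ∈ A, p x * (f x - m) ≤ ∑ x ∈ A, (#A : ℝ)⁻¹ * (f x - m) :=
    sum_le_sum fun x hx => mul_le_mul_of_nonneg_right (hpA x) (by linarith [hmin x hx])
  have hcentered : ∑ x, p x * (f x - m) = ∑ x, p x * f x - m := by
    simp only [mul_sub, sum_sub_distrib, ← sum_mul, hp.2, one_mul]
  have haverage : ∑ x ∈ A, (#A : ℝ)⁻¹ * (f x - m) = (∑ x ∈ A, f x) / #A - m := by
    rw [← mul_sum, sum_sub_distrib, sum_const, nsmul_eq_mul]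
    field_simp
  rw [← sum_add_sum_compl A] at hcentered
  linarith

lemma IsDist.exists_card_eq_sum_mul_le {p : α → ℝ} (hp : IsDist p)
    (hpK : ∀ x, p x ≤ (K : ℝ)⁻¹) (f : α → ℝ) :
    ∃ A : Finset α, #A = K ∧ ∑ x, p x * f x ≤ (∑ x ∈ A, f x) / K := by
  obtain ⟨A, rfl, hA⟩ := exists_card_eq_forall_le_of_notMem f (hp.pos_and_le_card_s6 hpK).2
  exact ⟨A, rfl, hp.sum_mul_le_of_forall_le hpK hA⟩

lemma sum_distProd_mul_le {p : α → ℝ} {q : β → ℝ}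
    (hp : IsDist p) (hq : IsDist q) (hpK : ∀ x, p x ≤ (K : ℝ)⁻¹)
    (hqK : ∀ y, q y ≤ (K : ℝ)⁻¹) (χ : α × β → ℝ) {t : ℝ}
    (ht : ∀ A B, #A = K → #B = K → ∑ z ∈ A ×ˢ B, χ z ≤ t) :
    ∑ z, distProd p q z * χ z ≤ t / K ^ 2 := by
  obtain ⟨A, hA, hpA⟩ := hp.exists_card_eq_sum_mul_le hpK fun a => ∑ b, q b * χ (a, b)
  obtain ⟨B, hB, hqB⟩ := hq.exists_card_eq_sum_mul_le hqK fun b => ∑ a ∈ A, χ (a, b)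
  calc ∑ z, distProd p q z * χ z = ∑ a, p a * ∑ b, q b * χ (a, b) := by
        simp only [distProd, Fintype.sum_prod_type, mul_sum, mul_assoc]
    _ ≤ (∑ a ∈ A, ∑ b, q b * χ (a, b)) / K := hpA
    _ = (∑ b, q b * ∑ a ∈ A, χ (a, b)) / K := by
        rw [sum_comm]; simp only [mul_sum]
    _ ≤ ((∑ b ∈ B, ∑ a ∈ A, χ (a, b)) / K) / K := by gcongr
    _ = (∑ z ∈ A ×ˢ B, χ z) / K ^ 2 := by rw [sum_product, sum_comm, div_div, sq]
    _ ≤ t / K ^ 2 := by gcongr; exact ht A B hA hB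

lemma abs_sum_distProd_mul_le {p : α → ℝ} {q : β → ℝ}
    (hp : IsDist p) (hq : IsDist q) (hpK : ∀ x, p x ≤ (K : ℝ)⁻¹)
    (hqK : ∀ y, q y ≤ (K : ℝ)⁻¹) (χ : α × β → ℝ) {t : ℝ}
    (ht : ∀ A B, #A = K → #B = K → |∑ z ∈ A ×ˢ B, χ z| ≤ t) :
    |∑ z, distProd p q z * χ z| ≤ t / K ^ 2 := by
  have hneg := sum_distProd_mul_le hp hq hpK hqK (fun z => -χ z) fun A B hA hB => by
    rw [sum_neg_distrib]; exact (neg_le_abs _).trans (ht A B hA hB)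
  simp only [mul_neg, sum_neg_distrib] at hneg
  exact abs_le.2 ⟨by linarith,
    sum_distProd_mul_le hp hq hpK hqK χ fun A B hA hB => le_of_abs_le (ht A B hA hB)⟩

end FlatSources

section Marginals

variable {β : Type*} [Fintype β]

lemma sum_distPi_eq_one {ι : Type*} [Fintype ι] [DecidableEq ι] {p : ι → β → ℝ}
    (hp : ∀ i, IsDist (p i)) : ∑ x, distPi p x = 1 := by
  simp [distPi, ← Fintype.prod_sum, (hp _).2]

lemma sum_distPi_mul_fin_succ {m : ℕ} (p : Fin (m + 1) → β → ℝ)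
    (F : (Fin (m + 1) → β) → ℝ) :
    ∑ x, distPi p x * F x
      = ∑ a, p 0 a * ∑ v, distPi (fun i => p i.succ) v * F (Fin.cons a v) := by
  rw [← (Fin.consEquiv fun _ => β).sum_comp, Fintype.sum_prod_type]
  simp [Fin.consEquiv, distPi, Fin.prod_univ_succ, mul_sum, mul_assoc]

lemma sum_distPi_mul_eq_sum_distProd {m : ℕ} {p : Fin (m + 2) → β → ℝ}
    (hp : ∀ i, IsDist (p i)) (F : β → β → ℝ) :
    ∑ x, distPi p x * F (x 0) (x 1) = ∑ z, distProd (p 0) (p 1) z * F z.1 z.2 := by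
  have hrest : ∑ w, distPi (fun i : Fin m => p i.succ.succ) w = 1 :=
    sum_distPi_eq_one fun i => hp _
  simp [sum_distPi_mul_fin_succ, ← sum_mul, hrest, Fintype.sum_prod_type, distProd, mul_sum,
    mul_assoc]

end Marginals

lemma statDist_distMap_bit {α : Type*} [Fintype α] {μ : α → ℝ} (hμ : ∑ x, μ x = 1)
    (f : α → Bool) :
    statDist (distMap (fun x (_ : Fin 1) => f x) μ) (unifDist (BS 1))
      = |∑ x, μ x * bitSign (f x)| / 2 := by
  set q := distMap (fun x (_ : Fin 1) => f x) μ
  have hq : ∀ b, q (fun _ => b) = ∑ x, if f x = b then μ x else 0 := fun b => by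
    simp [q, distMap, sum_filter, funext_iff]
  have hsum : q (fun _ => true) + q (fun _ => false) = 1 := by
    rw [hq, hq, ← sum_add_distrib, ← hμ]
    exact sum_congr rfl fun x _ => by cases f x <;> simp
  have hdiff : q (fun _ => true) - q (fun _ => false) = ∑ x, μ x * bitSign (f x) := by
    rw [hq, hq, ← sum_sub_distrib]
    exact sum_congr rfl fun x _ => by cases f x <;> simp [bitSign]
  have hT : q (fun _ => true) - 2⁻¹ = (∑ x, μ x * bitSign (f x)) / 2 := by linarith
  have hF : q (fun _ => false) - 2⁻¹ = -((∑ x, μ x * bitSign (f x)) / 2) := by linarith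
  rw [statDist, ← (Equiv.funUnique (Fin 1) Bool).symm.sum_comp, Fintype.sum_bool]
  have hcard : (Fintype.card (BS 1) : ℝ)⁻¹ = 2⁻¹ := by simp
  simp only [unifDist, Equiv.funUnique_symm_apply, hcard]
  change (|q (fun _ => true) - 2⁻¹| + |q (fun _ => false) - 2⁻¹|) / 2 = _
  rw [hT, hF, abs_neg, abs_div, abs_two]
  ring

lemma sq_le_two_pow_ceil_two_mul_logb (n : ℕ) : (n : ℝ) ^ 2 ≤ 2 ^ ⌈2 * logb 2 n⌉₊ := by
  rcases n.eq_zero_or_pos with rfl | hn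
  · simp
  calc (n : ℝ) ^ 2 = (2 : ℝ) ^ (2 * logb 2 n) := by
        rw [mul_comm, rpow_mul zero_le_two, rpow_logb two_pos (by norm_num) (by positivity)]
        norm_cast
    _ ≤ (2 : ℝ) ^ (⌈2 * logb 2 n⌉₊ : ℝ) :=
        rpow_le_rpow_of_exponent_le one_le_two (Nat.le_ceil _)
    _ = 2 ^ ⌈2 * logb 2 n⌉₊ := rpow_natCast _ _

lemma two_mul_two_pow_pow_lt_exp {n K : ℕ} {δ : ℝ} (hn : 6 ≤ δ ^ 2 * n)
    (hK : (n : ℝ) ^ 2 ≤ K) :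
    2 * ((2 : ℝ) ^ n) ^ (2 * K) < exp (δ ^ 2 * K ^ 2 / 2) := by
  have hn1 : (1 : ℝ) ≤ n := by
    have : 0 < n := Nat.pos_of_ne_zero fun h => by simp [h] at hn; linarith
    exact_mod_cast this
  have hnK : (1 : ℝ) ≤ n * K := one_le_mul_of_one_le_of_one_le hn1 (by nlinarith)
  have hexponent : ((2 * n * K + 1 : ℕ) : ℝ) ≤ δ ^ 2 * K ^ 2 / 2 := by
    calc ((2 * n * K + 1 : ℕ) : ℝ) ≤ 6 * (n * K) / 2 := by push_cast; linarith
      _ ≤ δ ^ 2 * n * (n * K) / 2 := by gcongr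
      _ = δ ^ 2 * n ^ 2 * K / 2 := by ring
      _ ≤ δ ^ 2 * K ^ 2 / 2 := by rw [sq (K : ℝ), ← mul_assoc]; gcongr
  calc 2 * ((2 : ℝ) ^ n) ^ (2 * K) = 2 ^ (2 * n * K + 1) := by ring
    _ < exp 1 ^ (2 * n * K + 1) :=
        pow_lt_pow_left₀ (by linarith [exp_one_gt_d9]) zero_le_two (by omega)
    _ = exp ((2 * n * K + 1 : ℕ)) := by rw [← exp_nat_mul, mul_one]
    _ ≤ exp (δ ^ 2 * K ^ 2 / 2) := exp_le_exp.2 hexponent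

theorem stmt6 :
    ∀ ε : ℝ, ε > 0 →
      ∃ c : ℝ, c > 1 ∧ ∃ N : ℕ, ∀ n : ℕ, n ≥ N →
        ∃ ext : (Fin 10 → BS n) → BS 1,
          ∀ p : Fin 10 → (BS n → ℝ), (∀ i, IsDist (p i)) →
            (∀ i, MinEntropyGE (p i) (⌈c * logb 2 n⌉₊ : ℝ)) →
            statDist (distMap ext (distPi p)) (unifDist (BS 1)) ≤ ε := by
  intro ε hε
  refine ⟨2, by norm_num, ⌈6 / ε ^ 2⌉₊, fun n hn => ?_⟩
  set K := 2 ^ ⌈2 * logb 2 n⌉₊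
  have hεn : 6 ≤ ε ^ 2 * n := by
    rw [← div_le_iff₀' (by positivity)]; exact Nat.ceil_le.1 hn
  have hK : (n : ℝ) ^ 2 ≤ K := by simpa [K] using sq_le_two_pow_ceil_two_mul_logb n
  obtain ⟨g, hg⟩ := exists_forall_abs_sum_rectangle_lt (β := BS n) K hε.le
    (by simpa using two_mul_two_pow_pow_lt_exp hεn hK)
  refine ⟨fun x _ => g (x 0, x 1), fun p hp hpk => ?_⟩
  have hpK : ∀ i x, p i x ≤ (K : ℝ)⁻¹ := fun i x => by
    simpa [K, rpow_neg, rpow_natCast] using hpk i x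
  rw [statDist_distMap_bit (sum_distPi_eq_one hp),
    sum_distPi_mul_eq_sum_distProd hp fun a b => bitSign (g (a, b))]
  have hbias := abs_sum_distProd_mul_le (hp 0) (hp 1) (hpK 0) (hpK 1) (fun z => bitSign (g z))
    fun A B hA hB => (hg A B hA hB).le
  rw [mul_div_cancel_right₀ _ (by positivity)] at hbias
  linarith [abs_nonneg (∑ z, distProd (p 0) (p 1) z * bitSign (g z))]
end
end

section
/- Suppose nmExt : ({0,1}^n)^s → {0,1}^m is an s-source non-malleable extractor with error ε for min-entropy k. Then for any k' ≥ k, nmExt is a strong s-source non-malleable extractor for min-entropy k' with error 2^{2m}·(ε + 2^{k+1−k'}). -/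
open Finset Real

noncomputable section

/-- `nmExt` is an `s`-source non-malleable extractor with error `ε` for min-entropy `k`. -/
def IsNMsExt {n m : ℕ} (s : ℕ) (nmExt : (Fin s → BS n) → BS m) (k ε : ℝ) : Prop :=
  ∀ p : Fin s → (BS n → ℝ), (∀ i, IsDist (p i)) → (∀ i, MinEntropyGE (p i) k) →
    ∀ f : Fin s → (BS n → BS n), (∃ i, ∀ x, f i x ≠ x) →
      statDist
        (distMap (fun x : Fin s → BS n => (nmExt x, nmExt (fun i => f i (x i))))
          (distPi p))
        (distProd (unifDist (BS m))
          (distMap (fun x : Fin s → BS n => nmExt (fun i => f i (x i))) (distPi p)))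
      ≤ ε

/-- `nmExt` is a strong `s`-source non-malleable extractor with error `ε` for
min-entropy `k`: in addition to being non-malleable, for every index `i₀` the output is
close to uniform even given the tampered output and the `i₀`-th source. -/
def IsStrongNMsExt {n m : ℕ} (s : ℕ) (nmExt : (Fin s → BS n) → BS m) (k ε : ℝ) : Prop :=
  IsNMsExt s nmExt k ε ∧
  ∀ p : Fin s → (BS n → ℝ), (∀ i, IsDist (p i)) → (∀ i, MinEntropyGE (p i) k) →
    ∀ f : Fin s → (BS n → BS n), (∃ i, ∀ x, f i x ≠ x) →
      ∀ i₀ : Fin s,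
        statDist
          (distMap (fun x : Fin s → BS n => (nmExt x, nmExt (fun i => f i (x i)), x i₀))
            (distPi p))
          (distProd (unifDist (BS m))
            (distMap (fun x : Fin s → BS n => (nmExt (fun i => f i (x i)), x i₀))
              (distPi p)))
        ≤ ε

/-! For fixed values `z` of the extractor and `z'` of the tampered extractor, sum the deviation
between the joint law of `(nmExt X, nmExt (f X), X i₀)` and `U × (nmExt (f X), X i₀)` over a
set `B` of values of `X i₀`. If `Pr[X i₀ ∈ B] ≤ 2^(k - k')` the sum is at most that
probability. Otherwise conditioning `X i₀` on `B` costs at most `k' - k` bits of min-entropy,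
so the conditioned sources still have min-entropy `k`, and the non-malleability of `nmExt` bounds
the sum by `ε`. Taking for `B` the set where the deviation is positive, and then the set where
it is negative, bounds the `ℓ¹` deviation on each of the `2^(2m)` slices `(z, z')` by
`2 (ε + 2^(k - k'))`. -/

section Distributions

variable {α β : Type*}

lemma statDist_nonneg [Fintype α] (p q : α → ℝ) : 0 ≤ statDist p q := by
  unfold statDist
  positivity

lemma sum_distMap [Fintype α] [DecidableEq β] [Fintype β] (F : α → β) (p : α → ℝ) :
    ∑ y, distMap F p y = ∑ x, p x :=
  sum_fiberwise univ F p

lemma isDist_distMap [Fintype α] [DecidableEq β] [Fintype β] (F : α → β) {p : α → ℝ}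
    (hp : IsDist p) : IsDist (distMap F p) :=
  ⟨fun _ => sum_nonneg fun x _ => hp.1 x, (sum_distMap F p).trans hp.2⟩

lemma isDist_distProd [Fintype α] [Fintype β] {p : α → ℝ} {q : β → ℝ} (hp : IsDist p)
    (hq : IsDist q) : IsDist (distProd p q) := by
  refine ⟨fun z => mul_nonneg (hp.1 _) (hq.1 _), ?_⟩
  simp only [distProd, Fintype.sum_prod_type, ← mul_sum, hq.2, mul_one]
  exact hp.2

lemma isDist_unifDist [Fintype α] [Nonempty α] : IsDist (unifDist α) := by
  refine ⟨fun _ => by unfold unifDist; positivity, ?_⟩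
  simp [unifDist]

lemma isDist_distPi {ι : Type*} [Fintype ι] [DecidableEq ι] {κ : ι → Type*}
    [∀ i, Fintype (κ i)] {p : ∀ i, κ i → ℝ} (hp : ∀ i, IsDist (p i)) :
    IsDist (distPi p) := by
  refine ⟨fun v => prod_nonneg fun i _ => (hp i).1 (v i), ?_⟩
  rw [show ∑ v : ∀ i, κ i, distPi p v = ∑ v : ∀ i, κ i, ∏ i, p i (v i) from rfl,
    ← Fintype.piFinset_univ, ← prod_univ_sum]
  exact prod_eq_one fun i _ => (hp i).2

lemma abs_sub_le_statDist [Fintype α] {p q : α → ℝ} (hp : ∑ x, p x = 1)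
    (hq : ∑ x, q x = 1) (w : α) : |p w - q w| ≤ statDist p q := by
  classical
  have hrest : ∑ x ∈ univ.erase w, (p x - q x) = -(p w - q w) := by
    have hzero : ∑ x, (p x - q x) = 0 := by rw [sum_sub_distrib, hp, hq, sub_self]
    rw [← add_sum_erase univ _ (mem_univ w)] at hzero
    linarith
  have hle : |p w - q w| ≤ ∑ x ∈ univ.erase w, |p x - q x| := by
    rw [← abs_neg, ← hrest]
    exact abs_sum_le_sum_abs _ _
  rw [statDist, ← add_sum_erase univ (fun x => |p x - q x|) (mem_univ w)]
  linarith

lemma sum_abs_le_two_mul [Fintype α] {a : α → ℝ} {c : ℝ}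
    (h : ∀ B : Finset α, |∑ x ∈ B, a x| ≤ c) : ∑ x, |a x| ≤ 2 * c := by
  classical
  rw [← sum_filter_add_sum_filter_not univ (fun x => 0 ≤ a x), two_mul]
  refine add_le_add ?_ ?_
  · calc ∑ x with 0 ≤ a x, |a x| = ∑ x with 0 ≤ a x, a x :=
          sum_congr rfl fun x hx => abs_of_nonneg (mem_filter.1 hx).2
      _ ≤ c := (le_abs_self _).trans (h _)
  · calc ∑ x with ¬0 ≤ a x, |a x| = -∑ x with ¬0 ≤ a x, a x := by
          rw [← sum_neg_distrib]
          exact sum_congr rfl fun x hx => abs_of_neg (not_le.1 (mem_filter.1 hx).2)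
      _ ≤ c := (neg_le_abs _).trans (h _)

lemma MinEntropyGE.mono {p : α → ℝ} {k k' : ℝ} (hp : MinEntropyGE p k') (hk : k ≤ k') :
    MinEntropyGE p k :=
  fun x => (hp x).trans (rpow_le_rpow_of_exponent_le one_le_two (neg_le_neg hk))

end Distributions

section Conditioning

variable {α : Type*} [DecidableEq α]

def condDist (q : α → ℝ) (B : Finset α) : α → ℝ :=
  fun x => if x ∈ B then q x / ∑ y ∈ B, q y else 0

lemma isDist_condDist [Fintype α] {q : α → ℝ} {B : Finset α} (hq : IsDist q)
    (hB : 0 < ∑ y ∈ B, q y) : IsDist (condDist q B) := by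
  refine ⟨fun x => ?_, ?_⟩
  · unfold condDist
    split_ifs
    · exact div_nonneg (hq.1 x) hB.le
    · exact le_rfl
  · simp only [condDist]
    rw [sum_ite_mem, univ_inter, ← sum_div, div_self hB.ne']

lemma minEntropyGE_condDist {q : α → ℝ} {B : Finset α} {k k' : ℝ} (hq : MinEntropyGE q k')
    (hB : (2:ℝ) ^ (k - k') ≤ ∑ y ∈ B, q y) : MinEntropyGE (condDist q B) k := by
  intro x
  unfold condDist
  split_ifs
  · calc q x / ∑ y ∈ B, q y ≤ 2 ^ (-k') / 2 ^ (k - k') :=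
          div_le_div₀ (by positivity) (hq x) (by positivity) hB
      _ = 2 ^ (-k) := by rw [← rpow_sub two_pos]; ring_nf
  · positivity

variable {ι : Type*} [Fintype ι] [DecidableEq ι]

lemma distPi_update_condDist (p : ι → α → ℝ) (i₀ : ι) (B : Finset α)
    (hB : ∑ y ∈ B, p i₀ y ≠ 0) (v : ι → α) :
    (∑ y ∈ B, p i₀ y) * distPi (Function.update p i₀ (condDist (p i₀) B)) v
      = if v i₀ ∈ B then distPi p v else 0 := by
  have hrest : ∏ i ∈ {i₀}ᶜ, Function.update p i₀ (condDist (p i₀) B) i (v i)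
      = ∏ i ∈ {i₀}ᶜ, p i (v i) :=
    prod_congr rfl fun i hi => by rw [Function.update_of_ne (by simpa using hi)]
  rw [distPi, distPi, Fintype.prod_eq_mul_prod_compl i₀, Fintype.prod_eq_mul_prod_compl i₀,
    Function.update_self, hrest, condDist]
  split_ifs
  · field_simp
  · simp

lemma sum_filter_mem_distPi [Fintype α] (p : ι → α → ℝ) (i₀ : ι) (B : Finset α)
    (hB : ∑ y ∈ B, p i₀ y ≠ 0) (P : (ι → α) → Prop) [DecidablePred P] :
    ∑ v with P v ∧ v i₀ ∈ B, distPi p v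
      = (∑ y ∈ B, p i₀ y) *
          ∑ v with P v, distPi (Function.update p i₀ (condDist (p i₀) B)) v := by
  rw [← filter_filter, sum_filter, mul_sum]
  exact sum_congr rfl fun v _ => (distPi_update_condDist p i₀ B hB v).symm

lemma sum_filter_mem_distPi_le [Fintype α] {p : ι → α → ℝ} (hp : ∀ i, IsDist (p i))
    (i₀ : ι) (B : Finset α) (P : (ι → α) → Prop) [DecidablePred P] :
    ∑ v with P v ∧ v i₀ ∈ B, distPi p v ≤ ∑ y ∈ B, p i₀ y := by
  have hevent : univ.filter (fun v : ι → α => v i₀ ∈ B)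
      = Fintype.piFinset (Function.update (fun _ => univ) i₀ B) := by
    ext v
    simp only [mem_filter, mem_univ, true_and, Fintype.mem_piFinset]
    refine ⟨fun hv i => ?_, fun hv => by simpa using hv i₀⟩
    rcases eq_or_ne i i₀ with rfl | hi
    · simpa using hv
    · simp [Function.update_of_ne hi]
  calc ∑ v with P v ∧ v i₀ ∈ B, distPi p v ≤ ∑ v with v i₀ ∈ B, distPi p v :=
        sum_le_sum_of_subset_of_nonneg (monotone_filter_right _ fun _ _ h => h.2)
          fun v _ _ => (isDist_distPi hp).1 v
    _ = ∑ y ∈ B, p i₀ y := by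
        rw [hevent,
          show ∀ V, ∑ v ∈ V, distPi p v = ∑ v ∈ V, ∏ i, p i (v i) from fun _ => rfl,
          ← prod_univ_sum,
          Fintype.prod_eq_single i₀ fun i hi => by rw [Function.update_of_ne hi, (hp i).2],
          Function.update_self]

end Conditioning

section NonMalleable

variable {n m s : ℕ} {nmExt : (Fin s → BS n) → BS m} {k ε : ℝ}

lemma IsNMsExt.abs_distMap_sub_le (h : IsNMsExt s nmExt k ε) {p : Fin s → BS n → ℝ}
    (hd : ∀ i, IsDist (p i)) (hme : ∀ i, MinEntropyGE (p i) k) {f : Fin s → BS n → BS n}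
    (hf : ∃ i, ∀ x, f i x ≠ x) (z z' : BS m) :
    |distMap (fun v : Fin s → BS n => (nmExt v, nmExt fun i => f i (v i))) (distPi p) (z, z')
      - unifDist (BS m) z * distMap (fun v : Fin s → BS n => nmExt fun i => f i (v i))
          (distPi p) z'| ≤ ε :=
  (abs_sub_le_statDist (isDist_distMap _ (isDist_distPi hd)).2
    (isDist_distProd isDist_unifDist (isDist_distMap _ (isDist_distPi hd))).2 (z, z')).trans
    (h p hd hme f hf)

lemma IsNMsExt.abs_sum_filter_sub_le (h : IsNMsExt s nmExt k ε) {k' : ℝ} (hk : k ≤ k')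
    {p : Fin s → BS n → ℝ} (hd : ∀ i, IsDist (p i)) (hme : ∀ i, MinEntropyGE (p i) k')
    {f : Fin s → BS n → BS n} (hf : ∃ i, ∀ x, f i x ≠ x) (i₀ : Fin s) (z z' : BS m)
    {B : Finset (BS n)} (hB : 2 ^ (k - k') ≤ ∑ x ∈ B, p i₀ x) :
    |∑ v with (nmExt v = z ∧ nmExt (fun i => f i (v i)) = z') ∧ v i₀ ∈ B, distPi p v
      - unifDist (BS m) z * ∑ v with nmExt (fun i => f i (v i)) = z' ∧ v i₀ ∈ B, distPi p v|
      ≤ ε := by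
  set t := ∑ x ∈ B, p i₀ x
  have ht : 0 < t := (rpow_pos_of_pos two_pos _).trans_le hB
  have ht1 : t ≤ 1 := (sum_le_sum_of_subset_of_nonneg (subset_univ B)
    fun x _ _ => (hd i₀).1 x).trans (hd i₀).2.le
  set p' := Function.update p i₀ (condDist (p i₀) B)
  have hd' : ∀ i, IsDist (p' i) :=
    (Function.forall_update_iff p fun _ q => IsDist q).2
      ⟨isDist_condDist (hd i₀) ht, fun i _ => hd i⟩
  have hme' : ∀ i, MinEntropyGE (p' i) k :=
    (Function.forall_update_iff p fun _ q => MinEntropyGE q k).2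
      ⟨minEntropyGE_condDist (hme i₀) hB, fun i _ => (hme i).mono hk⟩
  have hpair : distMap (fun v : Fin s → BS n => (nmExt v, nmExt fun i => f i (v i)))
      (distPi p') (z, z')
      = ∑ v with nmExt v = z ∧ nmExt (fun i => f i (v i)) = z', distPi p' v :=
    sum_congr (filter_congr fun v _ => by simp [Prod.ext_iff]) fun _ _ => rfl
  have hcond := h.abs_distMap_sub_le hd' hme' hf z z'
  rw [hpair] at hcond
  rw [sum_filter_mem_distPi p i₀ B ht.ne', sum_filter_mem_distPi p i₀ B ht.ne',
    mul_left_comm, ← mul_sub, abs_mul, abs_of_pos ht]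
  calc t * _ ≤ 1 * ε := mul_le_mul ht1 hcond (abs_nonneg _) zero_le_one
    _ = ε := one_mul ε

lemma IsNMsExt.abs_sum_sub_le (h : IsNMsExt s nmExt k ε) {k' : ℝ} (hk : k ≤ k')
    {p : Fin s → BS n → ℝ} (hd : ∀ i, IsDist (p i)) (hme : ∀ i, MinEntropyGE (p i) k')
    {f : Fin s → BS n → BS n} (hf : ∃ i, ∀ x, f i x ≠ x) (i₀ : Fin s) (z z' : BS m)
    (B : Finset (BS n)) :
    |∑ x ∈ B,
        (distMap (fun v : Fin s → BS n => (nmExt v, nmExt (fun i => f i (v i)), v i₀))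
            (distPi p) (z, z', x)
          - distProd (unifDist (BS m))
              (distMap (fun v : Fin s → BS n => (nmExt (fun i => f i (v i)), v i₀))
                (distPi p)) (z, z', x))|
      ≤ ε + 2 ^ (k - k') := by
  have hjoint : ∑ x ∈ B, distMap (fun v : Fin s → BS n =>
        (nmExt v, nmExt (fun i => f i (v i)), v i₀)) (distPi p) (z, z', x)
      = ∑ v with (nmExt v = z ∧ nmExt (fun i => f i (v i)) = z') ∧ v i₀ ∈ B,
          distPi p v := by
    rw [← filter_filter, ← sum_fiberwise_eq_sum_filter]
    refine sum_congr rfl fun x _ => ?_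
    rw [distMap, filter_filter]
    exact sum_congr (filter_congr fun v _ => by simp [Prod.ext_iff, and_assoc]) fun _ _ => rfl
  have htampered : ∑ x ∈ B, distProd (unifDist (BS m)) (distMap (fun v : Fin s → BS n =>
        (nmExt (fun i => f i (v i)), v i₀)) (distPi p)) (z, z', x)
      = unifDist (BS m) z *
          ∑ v with nmExt (fun i => f i (v i)) = z' ∧ v i₀ ∈ B, distPi p v := by
    rw [← filter_filter, ← sum_fiberwise_eq_sum_filter, mul_sum]
    refine sum_congr rfl fun x _ => ?_
    rw [distProd, distMap, filter_filter]
    exact congrArg _ (sum_congr (filter_congr fun v _ => by simp [Prod.ext_iff]) fun _ _ => rfl)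
  rw [sum_sub_distrib, hjoint, htampered]
  rcases le_or_gt (∑ x ∈ B, p i₀ x) (2 ^ (k - k')) with hsmall | hlarge
  · have hε : 0 ≤ ε := (statDist_nonneg _ _).trans (h p hd (fun i => (hme i).mono hk) f hf)
    have hu0 : 0 ≤ unifDist (BS m) z := by unfold unifDist; positivity
    have hu1 : unifDist (BS m) z ≤ 1 :=
      inv_le_one_of_one_le₀ (by exact_mod_cast Fintype.card_pos)
    have hnonneg : ∀ P : (Fin s → BS n) → Prop, [DecidablePred P] →
        0 ≤ ∑ v with P v ∧ v i₀ ∈ B, distPi p v :=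
      fun _ _ => sum_nonneg fun v _ => (isDist_distPi hd).1 v
    calc _ ≤ ∑ x ∈ B, p i₀ x :=
        abs_sub_le_of_nonneg_of_le (hnonneg _) (sum_filter_mem_distPi_le hd i₀ B _)
          (mul_nonneg hu0 (hnonneg _))
          ((mul_le_of_le_one_left (hnonneg _) hu1).trans (sum_filter_mem_distPi_le hd i₀ B _))
      _ ≤ ε + 2 ^ (k - k') := by linarith
  · linarith [h.abs_sum_filter_sub_le hk hd hme hf i₀ z z' hlarge.le,
      rpow_pos_of_pos two_pos (k - k')]

lemma IsNMsExt.statDist_strong_le (h : IsNMsExt s nmExt k ε) {k' : ℝ} (hk : k ≤ k')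
    {p : Fin s → BS n → ℝ} (hd : ∀ i, IsDist (p i)) (hme : ∀ i, MinEntropyGE (p i) k')
    {f : Fin s → BS n → BS n} (hf : ∃ i, ∀ x, f i x ≠ x) (i₀ : Fin s) :
    statDist
        (distMap (fun x : Fin s → BS n => (nmExt x, nmExt (fun i => f i (x i)), x i₀))
          (distPi p))
        (distProd (unifDist (BS m))
          (distMap (fun x : Fin s → BS n => (nmExt (fun i => f i (x i)), x i₀))
            (distPi p)))
      ≤ 2 ^ (2 * m) * (ε + 2 ^ (k - k')) := by
  rw [statDist]
  simp only [Fintype.sum_prod_type]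
  calc _ ≤ (∑ _z : BS m, ∑ _z' : BS m, 2 * (ε + 2 ^ (k - k'))) / 2 := by
        gcongr with z _ z' _
        exact sum_abs_le_two_mul (h.abs_sum_sub_le hk hd hme hf i₀ z z')
    _ = 2 ^ (2 * m) * (ε + 2 ^ (k - k')) := by
        simp only [sum_const, card_univ, Fintype.card_fun, Fintype.card_bool, Fintype.card_fin,
          nsmul_eq_mul]
        push_cast
        ring

end NonMalleable

theorem stmt9 {n m s : ℕ} (nmExt : (Fin s → BS n) → BS m) (k ε k' : ℝ)
    (h : IsNMsExt s nmExt k ε) (hk : k' ≥ k) :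
    IsStrongNMsExt s nmExt k' ((2:ℝ) ^ (2 * m) * (ε + (2:ℝ) ^ (k + 1 - k'))) := by
  have hc : (2:ℝ) ^ (k - k') ≤ 2 ^ (k + 1 - k') :=
    rpow_le_rpow_of_exponent_le one_le_two (by linarith)
  refine ⟨fun p hd hme f hf => ?_, fun p hd hme f hf i₀ => ?_⟩
  · have hNM := h p hd (fun i => (hme i).mono hk) f hf
    have hε : 0 ≤ ε := (statDist_nonneg _ _).trans hNM
    calc _ ≤ ε := hNM
      _ ≤ 2 ^ (2 * m) * ε := le_mul_of_one_le_left hε (one_le_pow₀ one_le_two)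
      _ ≤ _ := by gcongr; linarith [rpow_pos_of_pos two_pos (k + 1 - k')]
  · exact (h.statDist_strong_le hk hd hme hf i₀).trans (by gcongr)
end
end
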